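/- arXiv:2205.03466 — 2 statements merged into one kernel-verified Lean document; each statement's English description precedes it below -/
import Mathlib

section
/- Let N+ be a rooted binary phylogenetic network on taxon set X, and suppose a set Q of four taxa determines a blob B of N+. Let Y ⊆ X be any subset containing Q which contains at least one taxon from each connected component, containing a taxon, of the graph obtained from N+ by deleting all nodes and edges of B. Then Q is a B-quartet on the induced network N+_Y. -/
/-!
# Common framework

Finite directed multigraphs, undirected connectivity, numbers of connected
components, cut edges, subgraphs, blobs, blobs determined by leaf sets,
B-quartets, and quartets displayed via cut-edge separation.

A *network* is modelled as a finite directed multigraph (edge directions are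
simply ignored for the undirected notions of connectivity, cut edges and
blobs).
-/

/-- A finite directed multigraph: finite types of nodes and of edges, with
source and target maps. -/
structure MDigraph where
  V : Type
  E : Type
  finV : Finite V
  finE : Finite E
  src : E → V
  tgt : E → V

attribute [instance] MDigraph.finV MDigraph.finE

namespace MDigraph

section Basic

variable (G : MDigraph)

/-- One undirected step between `u` and `v` along an edge from the set `F`. -/
def Step (F : Set G.E) (u v : G.V) : Prop :=
  ∃ e ∈ F, (G.src e = u ∧ G.tgt e = v) ∨ (G.src e = v ∧ G.tgt e = u)

/-- Undirected reachability (an undirected path) using only edges in `F`. -/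
def Conn (F : Set G.E) (u v : G.V) : Prop :=
  Relation.ReflTransGen (G.Step F) u v

/-- One directed step from `u` to `v` along an edge from the set `F`. -/
def DStep (F : Set G.E) (u v : G.V) : Prop :=
  ∃ e ∈ F, G.src e = u ∧ G.tgt e = v

/-- Directed reachability (a directed path) using only edges in `F`. -/
def DConn (F : Set G.E) (u v : G.V) : Prop :=
  Relation.ReflTransGen (G.DStep F) u v

/-- `u` is above (ancestral to) `v`: there is a directed path from `u` to `v`. -/
def Above (u v : G.V) : Prop := G.DConn Set.univ u v

/-- In-degree of a node. -/
noncomputable def inDeg (v : G.V) : ℕ := Nat.card {e : G.E // G.tgt e = v}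

/-- Out-degree of a node. -/
noncomputable def outDeg (v : G.V) : ℕ := Nat.card {e : G.E // G.src e = v}

/-- Undirected degree of a node (a loop counts twice). -/
noncomputable def degree (v : G.V) : ℕ := G.inDeg v + G.outDeg v

/-- The number of connected components of the graph with node set `W` and edge
set the restriction to `W` of `F` (two nodes of `W` lie in the same connected
component iff they are joined by an undirected path). -/
noncomputable def numComponents (W : Set G.V) (F : Set G.E) : ℕ :=
  Nat.card (Quot (fun u v : W => G.Step {e ∈ F | G.src e ∈ W ∧ G.tgt e ∈ W} u.1 v.1))

/-- `v` lies on every directed path from `u` to `w`: there is no directed path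
from `u` to `w` all of whose nodes avoid `v`. -/
def OnEveryPath (v u w : G.V) : Prop :=
  ¬ (u ≠ v ∧ w ≠ v ∧
      Relation.ReflTransGen (fun a b => G.DStep Set.univ a b ∧ a ≠ v ∧ b ≠ v) u w)

end Basic

/-- A subgraph (subnetwork): a set of nodes together with a set of edges
joining them. -/
structure Subgraph (G : MDigraph) where
  verts : Set G.V
  edges : Set G.E
  src_mem : ∀ e ∈ edges, G.src e ∈ verts
  tgt_mem : ∀ e ∈ edges, G.tgt e ∈ verts

/-- The whole graph, as a subgraph of itself. -/
def top (G : MDigraph) : Subgraph G :=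
  ⟨Set.univ, Set.univ, fun _ _ => Set.mem_univ _, fun _ _ => Set.mem_univ _⟩

namespace Subgraph

variable {G : MDigraph}

/-- Containment of subgraphs. -/
def le (H K : Subgraph G) : Prop := H.verts ⊆ K.verts ∧ H.edges ⊆ K.edges

/-- The subgraph `H` is connected. -/
def IsConnected (H : Subgraph G) : Prop :=
  H.verts.Nonempty ∧ ∀ u ∈ H.verts, ∀ v ∈ H.verts, G.Conn H.edges u v

/-- Delete an edge from a subgraph. -/
def deleteEdge (H : Subgraph G) (e : G.E) : Subgraph G :=
  ⟨H.verts, H.edges \ {e}, fun e' he' => H.src_mem e' he'.1,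
    fun e' he' => H.tgt_mem e' he'.1⟩

/-- The number of connected components of a subgraph. -/
noncomputable def numComponents (H : Subgraph G) : ℕ :=
  G.numComponents H.verts H.edges

/-- `e` is a cut edge of the (sub)graph `H`: deleting it increases the number
of connected components. -/
def IsCutEdge (H : Subgraph G) (e : G.E) : Prop :=
  e ∈ H.edges ∧ H.numComponents < (H.deleteEdge e).numComponents

end Subgraph

variable {G : MDigraph}

/-- `B` is a blob of the network `H`: a maximal connected subnetwork of `H`
having no cut edges.  (A blob is *trivial* if it consists of a single node.) -/
def IsBlobIn (H B : Subgraph G) : Prop :=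
  B.le H ∧ B.IsConnected ∧ (∀ e, ¬ B.IsCutEdge e) ∧
    ∀ B' : Subgraph G, B'.le H → B'.IsConnected → (∀ e, ¬ B'.IsCutEdge e) →
      B.le B' → B'.le B

/-- `e` is a cut edge of the network `H` incident to the blob `B`: exactly one
of its endpoints is a node of `B`. -/
def IncidentCut (H B : Subgraph G) (e : G.E) : Prop :=
  H.IsCutEdge e ∧ Xor' (G.src e ∈ B.verts) (G.tgt e ∈ B.verts)

/-- The blob `B` of the network `H` is determined by the set `S` of leaf
labels: deletion of the cut edges of `H` incident to `B` leaves the nodes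
labelled by the elements of `S` in distinct connected components. -/
def DeterminesIn {X : Type} (H B : Subgraph G) (leaf : X → G.V) (S : Set X) : Prop :=
  ∀ s ∈ S, ∀ t ∈ S, s ≠ t →
    ¬ G.Conn {e ∈ H.edges | ¬ IncidentCut H B e} (leaf s) (leaf t)

/-- Four taxa form a B-quartet on the network `H`: some blob of `H` is
determined by them. -/
def BQuartetIn {X : Type} (H : Subgraph G) (leaf : X → G.V) (a b c d : X) : Prop :=
  ∃ B : Subgraph G, IsBlobIn H B ∧ DeterminesIn H B leaf ({a, b, c, d} : Set X)

/-- Some cut edge of `H` separates the taxa `p, q` from the taxa `r, s`: after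
its deletion `p, q` lie in one connected component and `r, s` in another.  For
a 4-taxon set `{p,q,r,s}` this says exactly that the (reduced unrooted) tree of
blobs of `H` displays the resolved quartet `pq|rs` (the edges of the tree of
blobs correspond exactly to the cut edges of the network, and suppressing
degree-2 nodes or contracting blobs does not affect which taxa a cut edge
separates). -/
def CutSep {X : Type} (H : Subgraph G) (leaf : X → G.V) (p q r s : X) : Prop :=
  ∃ e, H.IsCutEdge e ∧
    G.Conn (H.edges \ {e}) (leaf p) (leaf q) ∧
    G.Conn (H.edges \ {e}) (leaf r) (leaf s) ∧
    ¬ G.Conn (H.edges \ {e}) (leaf p) (leaf r)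

end MDigraph
open MDigraph in
/-- A rooted binary phylogenetic network on the taxon set `X`: a connected
directed acyclic graph whose node set consists of a root (in-degree 0,
out-degree 2), leaves (in-degree 1, out-degree 0) bijectively labelled by `X`,
tree nodes (in-degree 1, out-degree 2) and hybrid nodes (in-degree 2,
out-degree 1). -/
structure PhyloNetwork (X : Type) extends MDigraph where
  root : toMDigraph.V
  leaf : X → toMDigraph.V
  leaf_inj : Function.Injective leaf
  root_in : toMDigraph.inDeg root = 0
  root_out : toMDigraph.outDeg root = 2
  leaf_in : ∀ x, toMDigraph.inDeg (leaf x) = 1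
  leaf_out : ∀ x, toMDigraph.outDeg (leaf x) = 0
  internal : ∀ v, v ≠ root → (∀ x, v ≠ leaf x) →
      (toMDigraph.inDeg v = 1 ∧ toMDigraph.outDeg v = 2) ∨
      (toMDigraph.inDeg v = 2 ∧ toMDigraph.outDeg v = 1)
  acyclic : ∀ v, ¬ Relation.TransGen (toMDigraph.DStep Set.univ) v v
  conn : ∀ u v, toMDigraph.Conn Set.univ u v

namespace PhyloNetwork

open MDigraph

variable {X : Type} (N : PhyloNetwork X)

/-- The subnetwork of `N⁺` consisting of all nodes and edges ancestral to at
least one taxon in `Y`.  Since suppressing nodes of in- and out-degree 1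
affects neither blobs, nor cut edges, nor which sets of taxa they separate,
this subnetwork faithfully represents the induced network `N⁺_Y`. -/
def inducedSub (Y : Set X) : Subgraph N.toMDigraph where
  verts := {v | ∃ y ∈ Y, N.toMDigraph.Above v (N.leaf y)}
  edges := {e | ∃ y ∈ Y, N.toMDigraph.Above (N.toMDigraph.tgt e) (N.leaf y)}
  src_mem := by
    rintro e ⟨y, hy, h⟩
    exact ⟨y, hy, Relation.ReflTransGen.head ⟨e, Set.mem_univ e, rfl, rfl⟩ h⟩
  tgt_mem := by
    rintro e ⟨y, hy, h⟩
    exact ⟨y, hy, h⟩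

/-- `v` is a stable ancestor of the leaves: it is ancestral to every leaf and
lies on every directed path from the root to any leaf. -/
def IsStableAncestor (v : N.toMDigraph.V) : Prop :=
  (∀ x, N.toMDigraph.Above v (N.leaf x)) ∧
  ∀ x, N.toMDigraph.OnEveryPath v N.root (N.leaf x)

/-- `v` is the lowest stable ancestor (LSA) of the network: a stable ancestor
below all stable ancestors. -/
def IsLSA (v : N.toMDigraph.V) : Prop :=
  N.IsStableAncestor v ∧ ∀ u, N.IsStableAncestor u → N.toMDigraph.Above u v

/-- The number of cut edges of `N⁺` incident to the blob `B`. -/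
noncomputable def blobDeg (B : Subgraph N.toMDigraph) : ℕ :=
  Nat.card {e : N.toMDigraph.E // IncidentCut (top N.toMDigraph) B e}

/-- `B` is an `m`-blob of the rooted network `N⁺`: if the root is not in `B`
then `B` has exactly `m` incident cut edges, while if the root is in `B` then
`B` has exactly `m - 1` incident cut edges. -/
def IsMBlob (B : Subgraph N.toMDigraph) (m : ℕ) : Prop :=
  IsBlobIn (top N.toMDigraph) B ∧
    ((N.root ∈ B.verts ∧ m = N.blobDeg B + 1) ∨ (N.root ∉ B.verts ∧ m = N.blobDeg B))

end PhyloNetwork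

open MDigraph

/-!
Every node `v` of `B` is ancestral to a taxon of `Y`, so `B` is still a subgraph of the induced
network, where it remains a maximal bridgeless connected subgraph and is still determined by
`Q`. To find that taxon, follow a directed path from `v` down to a leaf `x`. If `x` lies in `B`,
then `B` is the trivial blob `{x}`, and `Q` can only determine it if `x ∈ Q ⊆ Y`. Otherwise the
path leaves `B` for the last time through an edge `e` into the component `C` of `N⁺ - B`
containing `x`, and `Y` contains a taxon `y` of `C`. By maximality of `B`, `e` is the only edge
between `B` and `C`: two such edges and a path inside `C` would form an ear of `B`. Any path from
the root to `y` must therefore enter `C` through `e`, so `y` lies below `v`.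
-/

theorem card_quot_lt_card_quot_iff {α : Type*} [Finite α] {r r' : α → α → Prop}
    (h : r' ≤ r) :
    Nat.card (Quot r) < Nat.card (Quot r') ↔ ∃ a b, r a b ∧ ¬ Relation.EqvGen r' a b := by
  let f : Quot r' → Quot r := Quot.map id h
  have hf : Function.Surjective f := Quot.ind fun a => ⟨Quot.mk _ a, rfl⟩
  have hinj : Function.Injective f ↔ ∀ a b, r a b → Relation.EqvGen r' a b := by
    refine ⟨fun hinj a b hab => Quot.eqvGen_exact (hinj (Quot.sound hab)), fun hr => ?_⟩
    rintro ⟨a⟩ ⟨b⟩ hab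
    refine Quot.eqvGen_sound ?_
    rw [← (Relation.EqvGen.is_equivalence r').eqvGen_eq]
    exact Relation.EqvGen.eqvGen_mono hr _ _ (Quot.eqvGen_exact hab)
  rw [(Nat.card_le_card_of_surjective f hf).lt_iff_ne, ne_comm, ne_eq,
    ← (Nat.bijective_iff_surjective_and_card f).trans (and_iff_right hf), Function.Bijective,
    and_iff_left hf, hinj]
  push Not
  rfl

namespace MDigraph

variable {G : MDigraph}

def Joins (G : MDigraph) (e : G.E) (u v : G.V) : Prop :=
  (G.src e = u ∧ G.tgt e = v) ∨ (G.src e = v ∧ G.tgt e = u)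

theorem Joins.symm {e : G.E} {u v : G.V} (h : G.Joins e u v) : G.Joins e v u :=
  Or.symm h

theorem Joins.eq_or_eq {e : G.E} {u v u' v' : G.V} (h : G.Joins e u v)
    (h' : G.Joins e u' v') : (u' = u ∧ v' = v) ∨ (u' = v ∧ v' = u) := by
  unfold Joins at h h'
  grind

theorem Joins.src_eq_or_tgt_eq {e : G.E} {u v : G.V} (h : G.Joins e u v) :
    G.src e = u ∨ G.tgt e = u :=
  h.elim (fun h => .inl h.1) (fun h => .inr h.2)

theorem Conn.exists_incident_of_ne {F : Set G.E} {u v : G.V} (h : G.Conn F u v) (huv : u ≠ v) :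
    ∃ e ∈ F, G.src e = v ∨ G.tgt e = v := by
  obtain rfl | ⟨w, -, e, he, hjoin⟩ := Relation.ReflTransGen.cases_tail h
  · exact absurd rfl huv
  · exact ⟨e, he, Joins.src_eq_or_tgt_eq (Joins.symm hjoin)⟩

theorem Joins.conn {F : Set G.E} {e : G.E} {u v : G.V} (h : G.Joins e u v) (he : e ∈ F) :
    G.Conn F u v :=
  .single ⟨e, he, h⟩

theorem Step.symm {F : Set G.E} {u v : G.V} (h : G.Step F u v) : G.Step F v u :=
  let ⟨e, he, h⟩ := h; ⟨e, he, Joins.symm h⟩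

theorem Step.mono {F F' : Set G.E} (hF : F ⊆ F') {u v : G.V} (h : G.Step F u v) :
    G.Step F' u v :=
  let ⟨e, he, h⟩ := h; ⟨e, hF he, h⟩

theorem Conn.symm {F : Set G.E} {u v : G.V} (h : G.Conn F u v) : G.Conn F v u := by
  induction h with
  | refl => exact .refl
  | tail _ hs ih => exact .head hs.symm ih

theorem Conn.mono {F F' : Set G.E} (hF : F ⊆ F') {u v : G.V} (h : G.Conn F u v) :
    G.Conn F' u v :=
  Relation.ReflTransGen.mono (fun _ _ => Step.mono hF) _ _ h

theorem Joins.conn_iff {F : Set G.E} {e : G.E} {u v : G.V} (hjoin : G.Joins e u v) :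
    G.Conn F (G.src e) (G.tgt e) ↔ G.Conn F u v := by
  rcases hjoin with ⟨rfl, rfl⟩ | ⟨rfl, rfl⟩
  exacts [Iff.rfl, ⟨Conn.symm, Conn.symm⟩]

theorem eqvGen_iff_conn {F : Set G.E} {W : Set G.V}
    (hF : ∀ e ∈ F, G.src e ∈ W ∧ G.tgt e ∈ W) {u v : W} :
    Relation.EqvGen (fun a b : W => G.Step F a b) u v ↔ G.Conn F u v := by
  refine ⟨fun h => ?_, fun h => ?_⟩
  · induction h with
    | rel _ _ h => exact .single h
    | refl => exact .refl
    | symm _ _ _ ih => exact ih.symm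
    | trans _ _ _ _ _ ih₁ ih₂ => exact ih₁.trans ih₂
  · suffices ∀ {a b : G.V} (ha : a ∈ W) (hb : b ∈ W), G.Conn F a b →
        Relation.EqvGen (fun a b : W => G.Step F a b) ⟨a, ha⟩ ⟨b, hb⟩ from this u.2 v.2 h
    intro a b ha hb h
    induction h with
    | refl => exact .refl _
    | @tail m v _ hstep ih =>
      obtain ⟨e, he, hjoin⟩ := hstep
      have hm : m ∈ W := by
        rcases hjoin with ⟨hs, -⟩ | ⟨-, ht⟩
        exacts [hs ▸ (hF e he).1, ht ▸ (hF e he).2]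
      exact .trans _ ⟨m, hm⟩ _ (ih hm) (.rel _ _ ⟨e, he, hjoin⟩)

namespace Subgraph

theorem numComponents_eq (K : Subgraph G) :
    K.numComponents = Nat.card (Quot fun u v : K.verts => G.Step K.edges u v) := by
  have hedges : {e ∈ K.edges | G.src e ∈ K.verts ∧ G.tgt e ∈ K.verts} = K.edges :=
    Set.sep_eq_self_iff_mem_true.2 fun e he => ⟨K.src_mem e he, K.tgt_mem e he⟩
  rw [numComponents, MDigraph.numComponents, hedges]

theorem isCutEdge_iff {K : Subgraph G} {e : G.E} :
    K.IsCutEdge e ↔ e ∈ K.edges ∧ ¬ G.Conn (K.edges \ {e}) (G.src e) (G.tgt e) := by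
  refine and_congr_right fun he => ?_
  have hF : ∀ g ∈ K.edges \ {e}, G.src g ∈ K.verts ∧ G.tgt g ∈ K.verts :=
    fun g hg => ⟨K.src_mem g hg.1, K.tgt_mem g hg.1⟩
  rw [numComponents_eq, numComponents_eq, deleteEdge,
    card_quot_lt_card_quot_iff fun _ _ => Step.mono Set.sdiff_subset]
  simp only [eqvGen_iff_conn hF]
  constructor
  · rintro ⟨a, b, ⟨g, hg, hjoin⟩, hab⟩ hconn
    refine hab ?_
    by_cases hge : g = e
    · exact (Joins.conn_iff (hge ▸ hjoin)).1 hconn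
    · exact Joins.conn hjoin ⟨hg, hge⟩
  · intro hconn
    exact ⟨⟨_, K.src_mem e he⟩, ⟨_, K.tgt_mem e he⟩, ⟨e, he, .inl ⟨rfl, rfl⟩⟩, hconn⟩

theorem forall_not_isCutEdge_iff {K : Subgraph G} :
    (∀ e, ¬ K.IsCutEdge e) ↔ ∀ e ∈ K.edges, G.Conn (K.edges \ {e}) (G.src e) (G.tgt e) := by
  simp only [isCutEdge_iff, not_and, not_not]

theorem IsCutEdge.anti {K K' : Subgraph G} (hKK' : K.edges ⊆ K'.edges) {e : G.E}
    (he : e ∈ K.edges) (hcut : K'.IsCutEdge e) : K.IsCutEdge e :=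
  isCutEdge_iff.2 ⟨he, fun hconn =>
    (isCutEdge_iff.1 hcut).2 (hconn.mono (Set.sdiff_subset_sdiff_left hKK'))⟩

end Subgraph

def IsWalk (F : Set G.E) : G.V → G.V → List G.E → Prop
  | u, w, [] => u = w
  | u, w, e :: l => e ∈ F ∧ ∃ m, G.Joins e u m ∧ IsWalk F m w l

namespace IsWalk

variable {F : Set G.E} {u w : G.V} {l : List G.E}

theorem subset (h : G.IsWalk F u w l) : ∀ g ∈ l, g ∈ F := by
  induction l generalizing u with
  | nil => simp
  | cons e l ih =>
    obtain ⟨he, m, -, hl⟩ := h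
    simpa [he] using ih hl

theorem conn (h : G.IsWalk F u w l) : G.Conn {g | g ∈ l} u w := by
  induction l generalizing u with
  | nil => exact h ▸ .refl
  | cons e l ih =>
    obtain ⟨-, m, hjoin, hl⟩ := h
    exact (hjoin.conn List.mem_cons_self).trans
      ((ih hl).mono fun g hg => List.mem_cons_of_mem e hg)

theorem append_iff {s t : List G.E} :
    G.IsWalk F u w (s ++ t) ↔ ∃ m, G.IsWalk F u m s ∧ G.IsWalk F m w t := by
  induction s generalizing u with
  | nil => exact ⟨fun h => ⟨u, rfl, h⟩, fun ⟨m, hm, h⟩ => hm ▸ h⟩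
  | cons e s ih =>
    simp only [List.cons_append, IsWalk, ih]
    grind

theorem exists_split (h : G.IsWalk F u w l) {g : G.E} (hg : g ∈ l) :
    ∃ s t α β, l = s ++ g :: t ∧ G.IsWalk F u α s ∧ G.Joins g α β ∧ G.IsWalk F β w t := by
  obtain ⟨s, t, rfl⟩ := List.append_of_mem hg
  obtain ⟨α, hs, -, β, hjoin, ht⟩ := append_iff.1 h
  exact ⟨s, t, α, β, rfl, hs, hjoin, ht⟩

theorem exists_nodup (h : G.IsWalk F u w l) : ∃ l', G.IsWalk F u w l' ∧ l'.Nodup := by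
  induction l generalizing u with
  | nil => exact ⟨[], h, List.nodup_nil⟩
  | cons e l ih =>
    obtain ⟨he, m, hjoin, hl⟩ := h
    obtain ⟨l', hl', hnd⟩ := ih hl
    by_cases hel : e ∈ l'
    · obtain ⟨s, t, α, β, rfl, -, hjoin', ht⟩ := hl'.exists_split hel
      have hndt := (List.nodup_append.1 hnd).2.1
      rcases hjoin.eq_or_eq hjoin' with ⟨-, rfl⟩ | ⟨-, rfl⟩
      · exact ⟨e :: t, ⟨he, _, hjoin, ht⟩, hndt⟩
      · exact ⟨t, ht, (List.nodup_cons.1 hndt).2⟩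
    · exact ⟨e :: l', ⟨he, m, hjoin, hl'⟩, List.nodup_cons.2 ⟨hel, hnd⟩⟩

theorem mono {F' : Set G.E} (hF : F ⊆ F') (h : G.IsWalk F u w l) : G.IsWalk F' u w l := by
  induction l generalizing u with
  | nil => exact h
  | cons e l ih =>
    obtain ⟨he, m, hjoin, hl⟩ := h
    exact ⟨hF he, m, hjoin, ih hl⟩

end IsWalk

theorem Conn.exists_isWalk {F : Set G.E} {u w : G.V} (h : G.Conn F u w) :
    ∃ l, G.IsWalk F u w l := by
  induction h using Relation.ReflTransGen.head_induction_on with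
  | refl => exact ⟨[], rfl⟩
  | head hstep _ ih =>
    obtain ⟨l, hl⟩ := ih
    obtain ⟨e, he, hjoin⟩ := hstep
    exact ⟨e :: l, he, _, hjoin, hl⟩

theorem Conn.exists_trail {F : Set G.E} {u w : G.V} (h : G.Conn F u w) :
    ∃ l, G.IsWalk F u w l ∧ l.Nodup :=
  let ⟨_, hl⟩ := h.exists_isWalk; hl.exists_nodup

theorem Conn.diff_of_pendant {F : Set G.E} {v p : G.V} {e₀ : G.E} (hjoin : G.Joins e₀ p v)
    (hinc : ∀ g, G.src g = v ∨ G.tgt g = v → g = e₀) {u w : G.V} (h : G.Conn F u w)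
    (hu : u ≠ v) (hw : w ≠ v) : G.Conn (F \ {e₀}) u w := by
  classical
  -- contract the pendant edge onto `p`
  let φ : G.V → G.V := fun z => if z = v then p else z
  have hφ : ∀ a b, G.Step F a b → G.Conn (F \ {e₀}) (φ a) (φ b) := by
    rintro a b ⟨g, hg, hab : G.Joins g a b⟩
    by_cases hge : g = e₀
    · subst hge
      rcases hjoin.eq_or_eq hab with ⟨rfl, rfl⟩ | ⟨rfl, rfl⟩ <;> simp [φ] <;> exact .refl
    · have ha : a ≠ v := fun hav => hge (hinc g (hav ▸ hab.src_eq_or_tgt_eq))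
      have hb : b ≠ v := fun hbv => hge (hinc g (hbv ▸ hab.symm.src_eq_or_tgt_eq))
      simpa [φ, ha, hb] using hab.conn (F := F \ {e₀}) ⟨hg, hge⟩
  simpa [Conn, Function.onFun, φ, hu, hw] using Relation.ReflTransGen.lift' φ hφ _ _ h

theorem outDeg_eq_zero_iff {v : G.V} : G.outDeg v = 0 ↔ ∀ e, G.src e ≠ v := by
  simp [outDeg, Finite.card_eq_zero_iff, isEmpty_subtype]

theorem inDeg_eq_zero_iff {v : G.V} : G.inDeg v = 0 ↔ ∀ e, G.tgt e ≠ v := by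
  simp [inDeg, Finite.card_eq_zero_iff, isEmpty_subtype]

theorem IsBlobIn.conn {H B : Subgraph G} (hB : IsBlobIn H B) {u v : G.V} (hu : u ∈ B.verts)
    (hv : v ∈ B.verts) : G.Conn B.edges u v :=
  hB.2.1.2 u hu v hv

theorem IsBlobIn.conn_diff {H B : Subgraph G} (hB : IsBlobIn H B) {e : G.E} (he : e ∈ B.edges) :
    G.Conn (B.edges \ {e}) (G.src e) (G.tgt e) :=
  Subgraph.forall_not_isCutEdge_iff.1 hB.2.2.1 e he

theorem IsBlobIn.eq_singleton_of_pendant {H B : Subgraph G} (hB : IsBlobIn H B) {v p : G.V}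
    {e₀ : G.E} (hv : v ∈ B.verts) (hjoin : G.Joins e₀ p v) (hp : p ≠ v)
    (hinc : ∀ g, G.src g = v ∨ G.tgt g = v → g = e₀) : ∀ u ∈ B.verts, u = v := by
  intro u hu
  by_contra huv
  obtain ⟨g, hg, hgv⟩ := (hB.conn hu hv).exists_incident_of_ne huv
  obtain rfl := hinc g hgv
  obtain ⟨g', hg', hg'v⟩ := (hjoin.conn_iff.1 (hB.conn_diff hg)).exists_incident_of_ne hp
  exact hg'.2 (hinc g' hg'v)

/-- `B` together with the trail is still connected and bridgeless, so maximality of `B`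
applies. -/
theorem IsBlobIn.subset_of_trail {H B : Subgraph G} (hB : IsBlobIn H B) {u w : G.V}
    (hu : u ∈ B.verts) (hw : w ∈ B.verts) {l : List G.E} (hl : G.IsWalk H.edges u w l)
    (hnd : l.Nodup) : ∀ g ∈ l, g ∈ B.edges := by
  let K : Subgraph G :=
    { verts := B.verts ∪ {v | ∃ g ∈ l, G.src g = v ∨ G.tgt g = v}
      edges := B.edges ∪ {g | g ∈ l}
      src_mem := fun g hg => hg.elim (fun hg => .inl (B.src_mem g hg))
        (fun hg => .inr ⟨g, hg, .inl rfl⟩)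
      tgt_mem := fun g hg => hg.elim (fun hg => .inl (B.tgt_mem g hg))
        (fun hg => .inr ⟨g, hg, .inr rfl⟩) }
  have hBK : B.edges ⊆ K.edges := Set.subset_union_left
  have hlK : {g | g ∈ l} ⊆ K.edges := Set.subset_union_right
  have hconnK : ∀ v ∈ K.verts, G.Conn K.edges u v := by
    rintro v (hv | ⟨g, hg, hgv⟩)
    · exact (hB.conn hu hv).mono hBK
    · obtain ⟨s, t, α, β, rfl, hs, hjoin, -⟩ := hl.exists_split hg
      have hα : G.Conn K.edges u α :=
        hs.conn.mono fun g hg => hlK (List.mem_append_left _ hg)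
      have hβ : G.Conn K.edges u β := hα.trans (hjoin.conn (hlK (by simp)))
      rcases hjoin with ⟨rfl, rfl⟩ | ⟨rfl, rfl⟩ <;> rcases hgv with rfl | rfl <;> assumption
  have hK : K.IsConnected :=
    ⟨⟨u, .inl hu⟩, fun a ha b hb => (hconnK a ha).symm.trans (hconnK b hb)⟩
  have hbridgeless : ∀ f, ¬ K.IsCutEdge f := by
    refine Subgraph.forall_not_isCutEdge_iff.2 fun f hf => ?_
    by_cases hfB : f ∈ B.edges
    · exact (hB.conn_diff hfB).mono (Set.sdiff_subset_sdiff_left hBK)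
    obtain ⟨s, t, α, β, rfl, hs, hjoin, ht⟩ := hl.exists_split (hf.resolve_left hfB)
    have hf' : f ∉ s ++ t := (List.nodup_cons.1 (List.nodup_middle.1 hnd)).1
    have hst : ∀ g, g ∈ s ∨ g ∈ t → g ∈ K.edges \ {f} := fun g hg =>
      ⟨hlK (List.mem_append.2 (hg.imp_right (List.mem_cons_of_mem f))),
        fun hgf => hf' (List.mem_append.2 (Set.mem_singleton_iff.1 hgf ▸ hg))⟩
    have hBf : B.edges ⊆ K.edges \ {f} := fun g hg =>
      ⟨hBK hg, fun hgf => hfB (Set.mem_singleton_iff.1 hgf ▸ hg)⟩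
    refine hjoin.conn_iff.2 ?_
    exact (hs.conn.mono fun g hg => hst g (.inl hg)).symm.trans <|
      ((hB.conn hu hw).mono hBf).trans (ht.conn.mono fun g hg => hst g (.inr hg)).symm
  have hKH : K.le H := by
    refine ⟨Set.union_subset hB.1.1 ?_, Set.union_subset hB.1.2 hl.subset⟩
    rintro v ⟨g, hg, rfl | rfl⟩
    exacts [H.src_mem g (hl.subset g hg), H.tgt_mem g (hl.subset g hg)]
  exact fun g hg => (hB.2.2.2 K hKH hK hbridgeless ⟨Set.subset_union_left, hBK⟩).2 (.inr hg)

def ConnOutside (B : Subgraph G) : G.V → G.V → Prop :=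
  Relation.ReflTransGen fun u w => G.Step {e | e ∉ B.edges} u w ∧ u ∉ B.verts ∧ w ∉ B.verts

namespace ConnOutside

variable {B : Subgraph G} {u v w : G.V}

theorem symm (h : G.ConnOutside B u w) : G.ConnOutside B w u := by
  induction h with
  | refl => exact .refl
  | tail _ hs ih => exact .head ⟨hs.1.symm, hs.2.2, hs.2.1⟩ ih

theorem trans (h : G.ConnOutside B u v) (h' : G.ConnOutside B v w) : G.ConnOutside B u w :=
  Relation.ReflTransGen.trans h h'

theorem not_mem (h : G.ConnOutside B u w) (hu : u ∉ B.verts) : w ∉ B.verts := by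
  induction h with
  | refl => exact hu
  | tail _ hs _ => exact hs.2.2

theorem conn (h : G.ConnOutside B u w) :
    G.Conn {e | G.src e ∉ B.verts ∧ G.tgt e ∉ B.verts} u w := by
  induction h with
  | refl => exact .refl
  | tail _ hs ih =>
    obtain ⟨⟨g, -, hjoin⟩, hu, hw⟩ := hs
    refine ih.tail ⟨g, ?_, hjoin⟩
    rcases hjoin with ⟨rfl, rfl⟩ | ⟨rfl, rfl⟩
    exacts [⟨hu, hw⟩, ⟨hw, hu⟩]

end ConnOutside

/-- Two edges joining `B` to the same component of its complement, together with a trail inside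
that component, would form an ear of `B`. -/
theorem IsBlobIn.eq_of_connOutside {B : Subgraph G} (hB : IsBlobIn (top G) B)
    {e₁ e₂ : G.E} {b₁ c₁ b₂ c₂ : G.V}
    (h₁ : G.Joins e₁ b₁ c₁) (hb₁ : b₁ ∈ B.verts) (hc₁ : c₁ ∉ B.verts)
    (h₂ : G.Joins e₂ b₂ c₂) (hb₂ : b₂ ∈ B.verts)
    (hc : G.ConnOutside B c₁ c₂) : e₁ = e₂ := by
  by_contra hne
  obtain ⟨l, hl, hnd⟩ := hc.conn.exists_trail
  have hnotin : ∀ {e b c}, G.Joins e b c → b ∈ B.verts → e ∉ l := fun hjoin hb hel => by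
    rcases hjoin.src_eq_or_tgt_eq with rfl | rfl
    exacts [(hl.subset _ hel).1 hb, (hl.subset _ hel).2 hb]
  have hwalk : G.IsWalk (top G).edges b₁ b₂ (e₁ :: (l ++ [e₂])) :=
    ⟨trivial, c₁, h₁, IsWalk.append_iff.2 ⟨c₂, hl.mono (Set.subset_univ _),
      trivial, b₂, h₂.symm, rfl⟩⟩
  have hnodup : (e₁ :: (l ++ [e₂])).Nodup := by
    simp only [List.nodup_cons, List.nodup_append, List.mem_append, List.mem_singleton]
    refine ⟨not_or.2 ⟨hnotin h₁ hb₁, hne⟩, hnd, ⟨List.not_mem_nil, .nil⟩, ?_⟩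
    rintro e hel _ rfl rfl
    exact hnotin h₂ hb₂ hel
  have he₁ := hB.subset_of_trail hb₁ hb₂ hwalk hnodup e₁ List.mem_cons_self
  rcases h₁ with ⟨-, rfl⟩ | ⟨rfl, -⟩
  exacts [hc₁ (B.tgt_mem _ he₁), hc₁ (B.src_mem _ he₁)]

theorem IsBlobIn.of_le {H B : Subgraph G} (hB : IsBlobIn (top G) B) (hBH : B.le H) :
    IsBlobIn H B :=
  ⟨hBH, hB.2.1, hB.2.2.1, fun B' _ => hB.2.2.2 B' ⟨Set.subset_univ _, Set.subset_univ _⟩⟩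

theorem DeterminesIn.anti {X : Type} {H H' B : Subgraph G} {leaf : X → G.V} {S : Set X}
    (hdet : DeterminesIn H' B leaf S) (hHH' : H.edges ⊆ H'.edges) : DeterminesIn H B leaf S :=
  fun s hs t ht hst hconn => hdet s hs t ht hst <| hconn.mono fun e he =>
    (⟨hHH' he.1, fun hinc => he.2 ⟨hinc.1.anti hHH' he.1, hinc.2⟩⟩ :
      e ∈ {e ∈ H'.edges | ¬ IncidentCut H' B e})

section Directed

variable {B : Subgraph G}

theorem DStep.connOutside {u w : G.V} (h : G.DStep Set.univ u w) (hu : u ∉ B.verts)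
    (hw : w ∉ B.verts) : G.ConnOutside B u w :=
  let ⟨g, _, hs, ht⟩ := h
  .single ⟨⟨g, fun hg => hu (hs ▸ B.src_mem g hg), .inl ⟨hs, ht⟩⟩, hu, hw⟩

theorem Above.exists_last_exit {u w : G.V} (h : G.Above u w) (hw : w ∉ B.verts) :
    (u ∉ B.verts ∧ G.ConnOutside B u w) ∨
    ∃ e, G.src e ∈ B.verts ∧ G.tgt e ∉ B.verts ∧ G.Above u (G.tgt e) ∧
      G.ConnOutside B (G.tgt e) w ∧ G.Above (G.tgt e) w := by
  induction h using Relation.ReflTransGen.head_induction_on with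
  | refl => exact .inl ⟨hw, .refl⟩
  | @head a m hstep hrest ih =>
    rcases ih with ⟨hm, hmw⟩ | ⟨e, he₁, he₂, hme, hew, hew'⟩
    · by_cases ha : a ∈ B.verts
      · obtain ⟨g, -, rfl, rfl⟩ := hstep
        exact .inr ⟨g, ha, hm, .single ⟨g, trivial, rfl, rfl⟩, hmw, hrest⟩
      · exact .inl ⟨ha, (hstep.connOutside ha hm).trans hmw⟩
    · exact .inr ⟨e, he₁, he₂, .head hstep hme, hew, hew'⟩

theorem Above.exists_first_entry {u w : G.V} (h : G.Above u w) (hu : u ∉ B.verts)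
    (hw : w ∈ B.verts) :
    ∃ e, G.src e ∉ B.verts ∧ G.tgt e ∈ B.verts ∧ G.ConnOutside B u (G.src e) := by
  induction h using Relation.ReflTransGen.head_induction_on with
  | refl => exact absurd hw hu
  | @head a m hstep _ ih =>
    by_cases hm : m ∈ B.verts
    · obtain ⟨g, -, rfl, rfl⟩ := hstep
      exact ⟨g, hu, hm, .refl⟩
    · obtain ⟨e, he₁, he₂, hme⟩ := ih hm
      exact ⟨e, he₁, he₂, (hstep.connOutside hu hm).trans hme⟩

end Directed

end MDigraph

namespace PhyloNetwork

variable {X : Type} (N : PhyloNetwork X)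

theorem wellFounded_dStep : WellFounded (N.DStep Set.univ) :=
  have : Std.Irrefl (Relation.TransGen (N.DStep Set.univ)) := ⟨N.acyclic⟩
  Subrelation.wf (fun h => Relation.TransGen.single h) (Finite.wellFounded_of_trans_of_irrefl _)

theorem wellFounded_flip_dStep : WellFounded (flip (N.DStep Set.univ)) :=
  have : Std.Irrefl (Relation.TransGen (flip (N.DStep Set.univ))) :=
    ⟨fun v h => N.acyclic v (Relation.transGen_swap.1 h)⟩
  Subrelation.wf (fun h => Relation.TransGen.single h) (Finite.wellFounded_of_trans_of_irrefl _)

theorem eq_root_of_inDeg_eq_zero {v : N.V} (hv : N.inDeg v = 0) : v = N.root := by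
  by_contra hroot
  by_cases hleaf : ∃ x, v = N.leaf x
  · obtain ⟨x, rfl⟩ := hleaf
    have := N.leaf_in x
    omega
  · push Not at hleaf
    rcases N.internal v hroot hleaf with ⟨h, -⟩ | ⟨h, -⟩ <;> omega

theorem exists_eq_leaf_of_outDeg_eq_zero {v : N.V} (hv : N.outDeg v = 0) : ∃ x, v = N.leaf x := by
  by_contra hleaf
  push Not at hleaf
  by_cases hroot : v = N.root
  · have := N.root_out
    rw [← hroot] at this
    omega
  · rcases N.internal v hroot hleaf with ⟨-, h⟩ | ⟨-, h⟩ <;> omega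

theorem root_above (v : N.V) : N.Above N.root v := by
  induction v using N.wellFounded_dStep.induction with
  | _ v ih =>
    by_cases hin : N.inDeg v = 0
    · rw [← N.eq_root_of_inDeg_eq_zero hin]
      exact .refl
    · obtain ⟨e, rfl⟩ : ∃ e, N.tgt e = v := by simpa [inDeg_eq_zero_iff] using hin
      exact (ih _ ⟨e, trivial, rfl, rfl⟩).tail ⟨e, trivial, rfl, rfl⟩

theorem exists_above_leaf (v : N.V) : ∃ x, N.Above v (N.leaf x) := by
  induction v using N.wellFounded_flip_dStep.induction with
  | _ v ih =>
    by_cases hout : N.outDeg v = 0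
    · obtain ⟨x, rfl⟩ := N.exists_eq_leaf_of_outDeg_eq_zero hout
      exact ⟨x, .refl⟩
    · obtain ⟨e, rfl⟩ : ∃ e, N.src e = v := by simpa [outDeg_eq_zero_iff] using hout
      obtain ⟨x, hx⟩ := ih _ ⟨e, trivial, rfl, rfl⟩
      exact ⟨x, .head ⟨e, trivial, rfl, rfl⟩ hx⟩

theorem src_ne_leaf (e : N.E) (x : X) : N.src e ≠ N.leaf x :=
  outDeg_eq_zero_iff.1 (N.leaf_out x) e

theorem exists_pendant_edge (x : X) :
    ∃ e₀, N.tgt e₀ = N.leaf x ∧ ∀ g, N.src g = N.leaf x ∨ N.tgt g = N.leaf x → g = e₀ := by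
  obtain ⟨⟨e₀, he₀⟩, huniq⟩ := (Nat.card_eq_one_iff_exists.1 (N.leaf_in x))
  refine ⟨e₀, he₀, fun g hg => ?_⟩
  have hg : N.tgt g = N.leaf x := hg.resolve_left (N.src_ne_leaf g x)
  exact congrArg Subtype.val (huniq ⟨g, hg⟩)

variable {N} {B : Subgraph N.toMDigraph}

/-- A blob containing a leaf is trivial, so its only incident edge is the leaf's pendant edge,
whose removal leaves all other leaves connected. -/
theorem mem_of_leaf_mem_blob (hB : IsBlobIn (top N.toMDigraph) B) {S : Set X}
    (hdet : DeterminesIn (top N.toMDigraph) B N.leaf S) {s t : X} (hs : s ∈ S) (ht : t ∈ S)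
    (hst : s ≠ t) {x : X} (hx : N.leaf x ∈ B.verts) : x ∈ S := by
  obtain ⟨e₀, he₀, hinc⟩ := N.exists_pendant_edge x
  have hjoin : N.Joins e₀ (N.src e₀) (N.leaf x) := .inl ⟨rfl, he₀⟩
  have hBx := hB.eq_singleton_of_pendant hx hjoin (N.src_ne_leaf e₀ x) hinc
  by_contra hxS
  have hleaf_ne : ∀ {y}, y ∈ S → N.leaf y ≠ N.leaf x := fun hy h =>
    hxS (N.leaf_inj h ▸ hy)
  have hsub : Set.univ \ {e₀} ⊆
      {e ∈ (top N.toMDigraph).edges | ¬ IncidentCut (top N.toMDigraph) B e} := by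
    rintro g ⟨-, hg⟩
    refine ⟨trivial, fun hcut => hg (hinc g ?_)⟩
    rcases hcut.2 with ⟨hsrc, -⟩ | ⟨htgt, -⟩
    exacts [.inl (hBx _ hsrc), .inr (hBx _ htgt)]
  exact hdet s hs t ht hst
    (((N.conn _ _).diff_of_pendant hjoin hinc (hleaf_ne hs) (hleaf_ne ht)).mono hsub)

/-- A path from the root to `z` must reach the component of `z` from `B`, and by uniqueness of the
attaching edge it does so along `e`. -/
theorem above_of_connOutside (hB : IsBlobIn (top N.toMDigraph) B) {e : N.E}
    (he₁ : N.src e ∈ B.verts) (he₂ : N.tgt e ∉ B.verts) {z : N.V}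
    (hz : N.ConnOutside B (N.tgt e) z) : N.Above (N.tgt e) z := by
  have hjoin : N.Joins e (N.src e) (N.tgt e) := .inl ⟨rfl, rfl⟩
  rcases (N.root_above z).exists_last_exit (hz.not_mem he₂) with
    ⟨hroot, hrz⟩ | ⟨e', he'₁, -, -, he'z, he'z'⟩
  · obtain ⟨e'', he''₁, he''₂, hre''⟩ := (N.root_above _).exists_first_entry hroot he₁
    have := hB.eq_of_connOutside hjoin he₁ he₂ (.inr ⟨rfl, rfl⟩) he''₂
      (hz.trans (hrz.symm.trans hre''))
    exact absurd (this ▸ he₁) he''₁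
  · rwa [hB.eq_of_connOutside hjoin he₁ he₂ (.inl ⟨rfl, rfl⟩) he'₁ (hz.trans he'z.symm)]

theorem blob_le_inducedSub (hB : IsBlobIn (top N.toMDigraph) B) {S : Set X}
    (hdet : DeterminesIn (top N.toMDigraph) B N.leaf S) {s t : X} (hs : s ∈ S) (ht : t ∈ S)
    (hst : s ≠ t) {Y : Set X} (hSY : S ⊆ Y)
    (hY : ∀ x, N.leaf x ∉ B.verts → ∃ y ∈ Y, N.ConnOutside B (N.leaf x) (N.leaf y)) :
    B.le (N.inducedSub Y) := by
  have hverts : ∀ v ∈ B.verts, ∃ y ∈ Y, N.Above v (N.leaf y) := by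
    intro v hv
    obtain ⟨x, hvx⟩ := N.exists_above_leaf v
    by_cases hx : N.leaf x ∈ B.verts
    · exact ⟨x, hSY (mem_of_leaf_mem_blob hB hdet hs ht hst hx), hvx⟩
    obtain ⟨y, hy, hxy⟩ := hY x hx
    rcases hvx.exists_last_exit hx with ⟨hv', -⟩ | ⟨e, he₁, he₂, hve, hex, -⟩
    · exact absurd hv hv'
    · exact ⟨y, hy, Relation.ReflTransGen.trans hve
        (above_of_connOutside hB he₁ he₂ (hex.trans hxy))⟩
  exact ⟨hverts, fun e he => hverts _ (B.tgt_mem e he)⟩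

end PhyloNetwork

/-- Let `N⁺` be a rooted binary phylogenetic network on taxon set `X`, and suppose
a set `Q = {a,b,c,d}` of four distinct taxa determines a blob `B` of `N⁺`.
Let `Y ⊆ X` be any subset containing `Q` which contains at least one taxon
from each connected component, containing a taxon, of the graph obtained from
`N⁺` by deleting all nodes and edges of `B`.  Then `Q` is a B-quartet on the
induced network `N⁺_Y` (represented by the subnetwork of nodes and edges
ancestral to taxa of `Y`). -/
theorem stmt_17 {X : Type} (N : PhyloNetwork X) (a b c d : X)
    (hpair : List.Pairwise (· ≠ ·) [a, b, c, d])
    (B : Subgraph N.toMDigraph) (hB : IsBlobIn (top N.toMDigraph) B)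
    (hdet : DeterminesIn (top N.toMDigraph) B N.leaf ({a, b, c, d} : Set X))
    (Y : Set X) (hQY : ({a, b, c, d} : Set X) ⊆ Y)
    (hY : ∀ x : X, N.leaf x ∉ B.verts →
      ∃ y ∈ Y, Relation.ReflTransGen
        (fun u w => N.toMDigraph.Step {e | e ∉ B.edges} u w ∧
          u ∉ B.verts ∧ w ∉ B.verts)
        (N.leaf x) (N.leaf y)) :
    BQuartetIn (N.inducedSub Y) N.leaf a b c d := by
  have hab : a ≠ b := (List.pairwise_cons.1 hpair).1 b List.mem_cons_self
  have hBY := PhyloNetwork.blob_le_inducedSub hB hdet (by simp) (by simp) hab hQY hY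
  exact ⟨B, hB.of_le hBY, hdet.anti (Set.subset_univ _)⟩
end

section
/- Let N+ be a rooted binary phylogenetic network on taxon set X with {a,b,c,d} a B-quartet, and let α ∈ X ∖ {a,b,c,d}. Let A be the subnetwork of N+ whose edges are those ancestral to the taxon α but to no other taxon, and let N' be the subnetwork whose edges are those ancestral to at least one taxon other than α. Suppose e0 is a cut edge of N' whose deletion leaves a, b in one connected component K_ab and c, d in the other component K_cd. Then there is an undirected path lying entirely within A from the leaf α to a node of K_ab, and there is also an undirected path lying entirely within A from α to a node of K_cd. -/
open MDigraph

/-!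
Since `{a, b, c, d}` determines a blob `B`, the paths `a – b` and `c – d` in `N' - e₀` both
enter `B`, and `B` has no cut edges, so `a` and `c` are joined in `N⁺ - e₀`. Such a path cannot
stay inside `N'`, and every edge outside `N'` is an edge of `A`, from which a directed path
inside `A` leads down to `α`. The near endpoint of the first edge of the path outside `N'` is
therefore joined to `α` within `A` and to `a` within `N' - e₀`; exchanging `a` and `c` gives
the other half.
-/

namespace MDigraph

variable {G : MDigraph}

theorem Conn.trans {F : Set G.E} {u v w : G.V} (h : G.Conn F u v) (h' : G.Conn F v w) :
    G.Conn F u w :=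
  Relation.ReflTransGen.trans h h'

theorem conn_src_tgt {F : Set G.E} {e : G.E} (he : e ∈ F) : G.Conn F (G.src e) (G.tgt e) :=
  .single ⟨e, he, .inl ⟨rfl, rfl⟩⟩

/-- The witness is the first edge of the path outside `P`. -/
theorem Conn.exists_exit {F : Set G.E} (P : Set G.E) {u v : G.V} (h : G.Conn F u v)
    (hP : ¬ G.Conn (F ∩ P) u v) :
    ∃ e ∈ F, e ∉ P ∧ (G.Conn (F ∩ P) u (G.src e) ∨ G.Conn (F ∩ P) u (G.tgt e)) := by
  induction h using Relation.ReflTransGen.head_induction_on with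
  | refl => exact absurd .refl hP
  | @head x y hstep _ ih =>
    obtain ⟨e, he, hor⟩ := hstep
    by_cases heP : e ∈ P
    · have hs : G.Step (F ∩ P) x y := ⟨e, ⟨he, heP⟩, hor⟩
      obtain ⟨e', he', he'P, hreach⟩ := ih fun h' => hP (.head hs h')
      exact ⟨e', he', he'P, hreach.imp (.head hs) (.head hs)⟩
    · refine ⟨e, he, heP, ?_⟩
      rcases hor with ⟨hsrc, -⟩ | ⟨-, htgt⟩
      · exact .inl (hsrc ▸ .refl)
      · exact .inr (htgt ▸ .refl)

/-- Such a path has to cross a cut edge incident to `B`, one of whose endpoints lies in `B`. -/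
theorem DeterminesIn.exists_conn_mem_verts {X : Type} {H B : Subgraph G} {leaf : X → G.V}
    {S : Set X} (hdet : DeterminesIn H B leaf S) {F : Set G.E} (hF : F ⊆ H.edges) {s t : X}
    (hs : s ∈ S) (ht : t ∈ S) (hst : s ≠ t) (h : G.Conn F (leaf s) (leaf t)) :
    ∃ w ∈ B.verts, G.Conn F (leaf s) w := by
  obtain ⟨e, he, hinc, hreach⟩ := h.exists_exit {e | ¬ IncidentCut H B e}
    fun h' => hdet s hs t ht hst (h'.mono (Set.inter_subset_inter_left _ hF))
  have hends : G.Conn F (leaf s) (G.src e) ∧ G.Conn F (leaf s) (G.tgt e) := by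
    rcases hreach with hsrc | htgt
    · have hsrc := hsrc.mono Set.inter_subset_left
      exact ⟨hsrc, hsrc.trans (conn_src_tgt he)⟩
    · have htgt := htgt.mono Set.inter_subset_left
      exact ⟨htgt.trans (conn_src_tgt he).symm, htgt⟩
  rcases (not_not.mp hinc).2 with ⟨hsrcB, -⟩ | ⟨htgtB, -⟩
  exacts [⟨_, hsrcB, hends.1⟩, ⟨_, htgtB, hends.2⟩]

namespace Subgraph

/-- `H.numComponents` is the number of classes of `H.compRel`. -/
def compRel (H : Subgraph G) (x y : H.verts) : Prop :=
  G.Step {e ∈ H.edges | G.src e ∈ H.verts ∧ G.tgt e ∈ H.verts} x.1 y.1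

theorem quot_mk_eq_iff_conn (H : Subgraph G) {u v : H.verts} :
    Quot.mk H.compRel u = Quot.mk H.compRel v ↔ G.Conn H.edges u v := by
  refine ⟨fun huv => ?_, fun h => ?_⟩
  · have hgen := Quot.eq.mp huv
    clear huv
    induction hgen with
    | rel _ _ h => exact .single (h.mono fun e he => he.1)
    | refl => exact .refl
    | symm _ _ _ ih => exact ih.symm
    | trans _ _ _ _ _ ih₁ ih₂ => exact ih₁.trans ih₂
  · suffices ∀ {x y : G.V}, G.Conn H.edges x y → ∀ (hx : x ∈ H.verts) (hy : y ∈ H.verts),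
        Quot.mk H.compRel ⟨x, hx⟩ = Quot.mk H.compRel ⟨y, hy⟩ from this h u.2 v.2
    intro x y hxy hx
    induction hxy with
    | refl => exact fun _ => rfl
    | @tail m z _ hstep ih =>
      obtain ⟨e, he, hor⟩ := hstep
      have hm : m ∈ H.verts := by
        rcases hor with ⟨hsrc, -⟩ | ⟨-, htgt⟩
        exacts [hsrc ▸ H.src_mem e he, htgt ▸ H.tgt_mem e he]
      exact fun _ => (ih hm).trans
        (Quot.sound ⟨e, ⟨he, H.src_mem e he, H.tgt_mem e he⟩, hor⟩)

theorem conn_diff_of_not_isCutEdge (H : Subgraph G) {e : G.E} (hnc : ¬ H.IsCutEdge e)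
    {u v : G.V} (hu : u ∈ H.verts) (hv : v ∈ H.verts) (h : G.Conn H.edges u v) :
    G.Conn (H.edges \ {e}) u v := by
  by_cases heH : e ∈ H.edges
  swap
  · rwa [Set.sdiff_singleton_eq_self heH]
  -- The components of `H - e` map onto those of `H`; there are not more of them, so this
  -- surjection is a bijection.
  let f : Quot (H.deleteEdge e).compRel → Quot H.compRel :=
    Quot.map id fun _ _ => Step.mono (Set.inter_subset_inter_left _ Set.sdiff_subset)
  have hsurj : Function.Surjective f := Quot.ind fun x => ⟨Quot.mk _ x, rfl⟩
  have hcard : Nat.card (Quot (H.deleteEdge e).compRel) = Nat.card (Quot H.compRel) :=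
    le_antisymm (not_lt.mp fun hlt => hnc ⟨heH, hlt⟩) (Nat.card_le_card_of_surjective f hsurj)
  have hinj := ((Nat.bijective_iff_surjective_and_card f).mpr ⟨hsurj, hcard⟩).1
  exact ((H.deleteEdge e).quot_mk_eq_iff_conn (u := ⟨u, hu⟩) (v := ⟨v, hv⟩)).mp
    (hinj ((H.quot_mk_eq_iff_conn (u := ⟨u, hu⟩) (v := ⟨v, hv⟩)).mpr h))

end Subgraph

end MDigraph

namespace PhyloNetwork

variable {X : Type} (N : PhyloNetwork X)

/-- The edges of the subnetwork `A`. -/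
def exclusiveEdges (α : X) : Set N.E :=
  {e | N.Above (N.tgt e) (N.leaf α) ∧ ∀ x, x ≠ α → ¬ N.Above (N.tgt e) (N.leaf x)}

theorem mem_inducedSub_edges_of_notMem_exclusiveEdges {α : X} {e : N.E}
    (he : e ∉ N.exclusiveEdges α) : e ∈ (N.inducedSub {x | x ≠ α}).edges := by
  obtain ⟨y, hy⟩ := N.exists_above_leaf (N.tgt e)
  by_cases hyα : y = α
  · subst hyα
    simp only [exclusiveEdges, Set.mem_ofPred_eq, not_and, not_forall, not_not] at he
    obtain ⟨x, hx, hax⟩ := he hy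
    exact ⟨x, hx, hax⟩
  · exact ⟨y, hyα, hy⟩

/-- Every directed path down from a node ancestral to `α` alone stays in `A`. -/
theorem conn_exclusiveEdges_of_above {α : X} {u : N.V} (hα : N.Above u (N.leaf α))
    (hother : ∀ x, x ≠ α → ¬ N.Above u (N.leaf x)) :
    N.Conn (N.exclusiveEdges α) u (N.leaf α) := by
  induction hα using Relation.ReflTransGen.head_induction_on with
  | refl => exact .refl
  | head hstep hrest ih =>
    obtain ⟨e, -, hsrc, htgt⟩ := hstep
    subst hsrc htgt
    have hother' : ∀ x, x ≠ α → ¬ N.Above (N.tgt e) (N.leaf x) := fun x hx hax =>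
      hother x hx (.head ⟨e, Set.mem_univ e, rfl, rfl⟩ hax)
    exact .head ⟨e, ⟨hrest, hother'⟩, .inl ⟨rfl, rfl⟩⟩ (ih hother')

theorem conn_exclusiveEdges_of_mem {α : X} {e : N.E} (he : e ∈ N.exclusiveEdges α) :
    N.Conn (N.exclusiveEdges α) (N.src e) (N.leaf α) ∧
      N.Conn (N.exclusiveEdges α) (N.tgt e) (N.leaf α) :=
  have htgt := N.conn_exclusiveEdges_of_above he.1 he.2
  ⟨(conn_src_tgt he).trans htgt, htgt⟩

/-- The path leaves `N'` through an edge of `A`; its near endpoint is the witness. -/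
theorem exists_conn_exclusiveEdges_of_not_conn (α : X) (e₀ : N.E) {u w : N.V}
    (h : N.Conn (Set.univ \ {e₀}) u w)
    (hn : ¬ N.Conn ((N.inducedSub {x | x ≠ α}).edges \ {e₀}) u w) :
    ∃ v, N.Conn (N.exclusiveEdges α) (N.leaf α) v ∧
      N.Conn ((N.inducedSub {x | x ≠ α}).edges \ {e₀}) v u := by
  have hsub : (Set.univ \ {e₀}) ∩ (N.exclusiveEdges α)ᶜ ⊆
      (N.inducedSub {x | x ≠ α}).edges \ {e₀} :=
    fun _ ⟨⟨_, he₀⟩, heA⟩ =>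
      ⟨N.mem_inducedSub_edges_of_notMem_exclusiveEdges heA, he₀⟩
  obtain ⟨e, -, heA, hreach⟩ :=
    h.exists_exit (N.exclusiveEdges α)ᶜ fun h' => hn (h'.mono hsub)
  have hends := N.conn_exclusiveEdges_of_mem (not_not.mp heA)
  rcases hreach with hsrc | htgt
  · exact ⟨N.src e, hends.1.symm, (hsrc.mono hsub).symm⟩
  · exact ⟨N.tgt e, hends.2.symm, (htgt.mono hsub).symm⟩

end PhyloNetwork

theorem stmt_18_general {X : Type} (N : PhyloNetwork X) (a b c d α : X)
    (hpair : List.Pairwise (· ≠ ·) [a, b, c, d, α])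
    (hB : BQuartetIn (top N.toMDigraph) N.leaf a b c d)
    (e₀ : N.toMDigraph.E)
    (hab : N.toMDigraph.Conn ((N.inducedSub {x | x ≠ α}).edges \ {e₀})
      (N.leaf a) (N.leaf b))
    (hcd : N.toMDigraph.Conn ((N.inducedSub {x | x ≠ α}).edges \ {e₀})
      (N.leaf c) (N.leaf d))
    (hac : ¬ N.toMDigraph.Conn ((N.inducedSub {x | x ≠ α}).edges \ {e₀})
      (N.leaf a) (N.leaf c)) :
    (∃ v, N.toMDigraph.Conn
        {e | N.toMDigraph.Above (N.toMDigraph.tgt e) (N.leaf α) ∧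
          ∀ x, x ≠ α → ¬ N.toMDigraph.Above (N.toMDigraph.tgt e) (N.leaf x)}
        (N.leaf α) v ∧
      N.toMDigraph.Conn ((N.inducedSub {x | x ≠ α}).edges \ {e₀}) v (N.leaf a)) ∧
    (∃ v, N.toMDigraph.Conn
        {e | N.toMDigraph.Above (N.toMDigraph.tgt e) (N.leaf α) ∧
          ∀ x, x ≠ α → ¬ N.toMDigraph.Above (N.toMDigraph.tgt e) (N.leaf x)}
        (N.leaf α) v ∧
      N.toMDigraph.Conn ((N.inducedSub {x | x ≠ α}).edges \ {e₀}) v (N.leaf c)) := by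
  obtain ⟨B, hblob, hdet⟩ := hB
  have hdistinct : a ≠ b ∧ c ≠ d := by
    simp only [List.pairwise_cons, List.mem_cons, List.not_mem_nil] at hpair
    exact ⟨hpair.1 b (by simp), hpair.2.2.1 d (by simp)⟩
  have hF : (N.inducedSub {x | x ≠ α}).edges \ {e₀} ⊆ (top N.toMDigraph).edges :=
    Set.subset_univ _
  obtain ⟨w, hwB, hwa⟩ := hdet.exists_conn_mem_verts hF (by simp) (by simp) hdistinct.1 hab
  obtain ⟨w', hw'B, hw'c⟩ := hdet.exists_conn_mem_verts hF (by simp) (by simp) hdistinct.2 hcd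
  have hww' : N.Conn (B.edges \ {e₀}) w w' :=
    B.conn_diff_of_not_isCutEdge (hblob.2.2.1 e₀) hwB hw'B (hblob.2.1.2 w hwB w' hw'B)
  have hsub {F : Set N.E} : F \ {e₀} ⊆ Set.univ \ {e₀} :=
    Set.sdiff_subset_sdiff_left (Set.subset_univ F)
  have hac' : N.Conn (Set.univ \ {e₀}) (N.leaf a) (N.leaf c) :=
    ((hwa.mono hsub).trans (hww'.mono hsub)).trans (hw'c.mono hsub).symm
  exact ⟨N.exists_conn_exclusiveEdges_of_not_conn α e₀ hac' hac,
    N.exists_conn_exclusiveEdges_of_not_conn α e₀ hac'.symm fun h => hac h.symm⟩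

/-- Let `N⁺` be a rooted binary phylogenetic network on taxon set `X` with
`{a,b,c,d}` a B-quartet, and `α ∈ X ∖ {a,b,c,d}`.  Let `A` be the subnetwork
of `N⁺` whose edges are those ancestral to the taxon `α` but to no other
taxon, and let `N'` be the subnetwork whose edges are those ancestral to at
least one taxon other than `α`.  Suppose `e₀` is a cut edge of `N'` whose
deletion leaves `a, b` in one connected component `K_ab` and `c, d` in the
other component `K_cd`.  Then there is an undirected path lying entirely
within `A` from the leaf `α` to a node of `K_ab`, and there is also an
undirected path lying entirely within `A` from `α` to a node of `K_cd`. -/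
theorem stmt_18 {X : Type} (N : PhyloNetwork X) (a b c d α : X)
    (hpair : List.Pairwise (· ≠ ·) [a, b, c, d, α])
    (hB : BQuartetIn (top N.toMDigraph) N.leaf a b c d)
    (e₀ : N.toMDigraph.E)
    (hcut : (N.inducedSub {x | x ≠ α}).IsCutEdge e₀)
    (hab : N.toMDigraph.Conn ((N.inducedSub {x | x ≠ α}).edges \ {e₀})
      (N.leaf a) (N.leaf b))
    (hcd : N.toMDigraph.Conn ((N.inducedSub {x | x ≠ α}).edges \ {e₀})
      (N.leaf c) (N.leaf d))
    (hac : ¬ N.toMDigraph.Conn ((N.inducedSub {x | x ≠ α}).edges \ {e₀})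
      (N.leaf a) (N.leaf c)) :
    (∃ v, N.toMDigraph.Conn
        {e | N.toMDigraph.Above (N.toMDigraph.tgt e) (N.leaf α) ∧
          ∀ x, x ≠ α → ¬ N.toMDigraph.Above (N.toMDigraph.tgt e) (N.leaf x)}
        (N.leaf α) v ∧
      N.toMDigraph.Conn ((N.inducedSub {x | x ≠ α}).edges \ {e₀}) v (N.leaf a)) ∧
    (∃ v, N.toMDigraph.Conn
        {e | N.toMDigraph.Above (N.toMDigraph.tgt e) (N.leaf α) ∧
          ∀ x, x ≠ α → ¬ N.toMDigraph.Above (N.toMDigraph.tgt e) (N.leaf x)}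
        (N.leaf α) v ∧
      N.toMDigraph.Conn ((N.inducedSub {x | x ≠ α}).edges \ {e₀}) v (N.leaf c)) :=
  stmt_18_general N a b c d α hpair hB e₀ hab hcd hac
end
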